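/- Let P be the map P(x₁;x₂,…,xₙ) = (-1)ⁿ(x₂;x₃,…,xₙ) on chains C_•(X;X) of a quandle X acting on itself, with P of a 0-chain equal to 0, and let μ = μ_X be the module pairing over C_•(G;X). Then P(μ(a⊗b)) = (-1)^m μ(P(a)⊗b) + 𝟏(a)·P(χ(b)) for a ∈ C_k(X;X), b ∈ C_m(G;X), where 𝟏 is the augmentation and χ(g;x'₁,…,x'_m) = (x₀g; x'₁,…,x'_m) for the chosen basepoint x₀. -/

import Mathlib

/-- An augmented quandle `(X, G, η, ρ)` (with `ρ(a, η(a)) = a`). -/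
structure AugmentedQuandle (X G : Type*) [Group G] where
  act : X → X → X
  act_idem : ∀ a : X, act a a = a
  act_bij : ∀ b : X, Function.Bijective fun a => act a b
  act_dist : ∀ a b c : X, act (act a b) c = act (act a c) (act b c)
  rho : X → G → X
  rho_one : ∀ a : X, rho a 1 = a
  rho_mul : ∀ (a : X) (g h : G), rho (rho a g) h = rho a (g * h)
  rho_hom : ∀ (a b : X) (g : G), rho (act a b) g = act (rho a g) (rho b g)
  eta : X → G
  eta_cond : ∀ (a : X) (g : G), eta (rho a g) = g⁻¹ * eta a * g
  rho_eta : ∀ a : X, rho a (eta a) = a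

/-- The pairing `μ_X((y;x₁,…,x_k) ⊗ (g;x'₁,…,x'_m)) = (yg; x₁g,…,x_kg, x'₁,…,x'_m)`. -/
noncomputable def muPair {Y X G : Type*} (smul : Y → G → Y) (rho : X → G → X)
    (a : (Y × List X) →₀ ℤ) (b : (G × List X) →₀ ℤ) : (Y × List X) →₀ ℤ :=
  a.sum fun q z => b.sum fun r w =>
    Finsupp.single (smul q.1 r.1, q.2.map (fun x => rho x r.1) ++ r.2) (z * w)

/-- `P(x₁;x₂,…,xₙ) = (-1)ⁿ (x₂;x₃,…,xₙ)` (zero on 0-chains). -/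
noncomputable def Pmap {X : Type*} (c : (X × List X) →₀ ℤ) : (X × List X) →₀ ℤ :=
  c.sum fun q z =>
    match q.2 with
    | [] => 0
    | b :: t => Finsupp.single (b, t) ((-1) ^ t.length * z)

/-- The augmentation `𝟏`: the sum of the coefficients of the 0-chain part. -/
noncomputable def augOne {X : Type*} (a : (X × List X) →₀ ℤ) : ℤ :=
  a.sum fun q z => match q.2 with | [] => z | _ :: _ => 0

/-!
`P`, `𝟏` and `μ(· ⊗ b)` are additive, so it suffices to check the identity on a generator
`(y; l)`. If `l = x :: t`, then `μ` acts letterwise and `P` drops the head `yg`; the signs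
`(-1)^(|t| + m)` on both sides agree. If `l = []`, then `P(a) = 0`, and since `P` forgets
the first coordinate, `P(yg; w) = P(x₀g; w)`.
-/

section Additivity

variable {Y X G : Type*} (smul : Y → G → Y) (rho : X → G → X)

@[simp]
lemma muPair_zero_left (b : (G × List X) →₀ ℤ) : muPair smul rho 0 b = 0 := by
  simp [muPair]

lemma muPair_add_left (a a' : (Y × List X) →₀ ℤ) (b : (G × List X) →₀ ℤ) :
    muPair smul rho (a + a') b = muPair smul rho a b + muPair smul rho a' b := by
  unfold muPair
  apply Finsupp.sum_add_index' <;> intros <;>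
    simp [add_mul, Finsupp.single_add, Finsupp.sum_add]

lemma muPair_single_single (y : Y) (l : List X) (z : ℤ) (g : G) (w : List X) :
    muPair smul rho (Finsupp.single (y, l) z) (Finsupp.single (g, w) 1) =
      Finsupp.single (smul y g, l.map (rho · g) ++ w) z := by
  unfold muPair
  rw [Finsupp.sum_single_index, Finsupp.sum_single_index] <;> simp

end Additivity

section Generators

variable {X : Type*}

@[simp]
lemma Pmap_zero : Pmap (0 : (X × List X) →₀ ℤ) = 0 := by
  simp [Pmap]

lemma Pmap_add (a a' : (X × List X) →₀ ℤ) : Pmap (a + a') = Pmap a + Pmap a' := by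
  unfold Pmap
  apply Finsupp.sum_add_index'
  · rintro ⟨y, _ | ⟨x, t⟩⟩ <;> simp
  · rintro ⟨y, _ | ⟨x, t⟩⟩ z z' <;> simp [mul_add, Finsupp.single_add]

@[simp]
lemma Pmap_single_nil (y : X) (z : ℤ) : Pmap (Finsupp.single (y, ([] : List X)) z) = 0 := by
  unfold Pmap
  rw [Finsupp.sum_single_index]
  rfl

@[simp]
lemma Pmap_single_cons (y x : X) (t : List X) (z : ℤ) :
    Pmap (Finsupp.single (y, x :: t) z) = Finsupp.single (x, t) ((-1) ^ t.length * z) := by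
  unfold Pmap
  rw [Finsupp.sum_single_index]
  simp

lemma Pmap_single_eq_smul (y y' : X) (l : List X) (z : ℤ) :
    Pmap (Finsupp.single (y, l) z) = z • Pmap (Finsupp.single (y', l) 1) := by
  cases l <;> simp [Finsupp.smul_single, mul_comm]

@[simp]
lemma augOne_zero : augOne (0 : (X × List X) →₀ ℤ) = 0 := by
  simp [augOne]

lemma augOne_add (a a' : (X × List X) →₀ ℤ) : augOne (a + a') = augOne a + augOne a' := by
  unfold augOne
  apply Finsupp.sum_add_index'
  · rintro ⟨y, _ | ⟨x, t⟩⟩ <;> simp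
  · rintro ⟨y, _ | ⟨x, t⟩⟩ z z' <;> simp

@[simp]
lemma augOne_single_nil (y : X) (z : ℤ) : augOne (Finsupp.single (y, ([] : List X)) z) = z := by
  unfold augOne
  rw [Finsupp.sum_single_index]
  rfl

@[simp]
lemma augOne_single_cons (y x : X) (t : List X) (z : ℤ) :
    augOne (Finsupp.single (y, x :: t) z) = 0 := by
  unfold augOne
  rw [Finsupp.sum_single_index]
  rfl

end Generators

/-- `P(μ(a⊗b)) = (-1)^m μ(P(a)⊗b) + 𝟏(a)·P(χ(b))` for `a ∈ C_k(X;X)` and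
`b ∈ C_m(G;X)`, where `χ(b) = μ((x₀;)⊗b)` for a basepoint `x₀`. -/
theorem stmt_9 {X G : Type*} [Group G] (R : AugmentedQuandle X G) (x₀ : X)
    (g : G) (w : List X) (a : (X × List X) →₀ ℤ) :
    Pmap (muPair R.rho R.rho a (Finsupp.single (g, w) 1)) =
      (-1) ^ w.length • muPair R.rho R.rho (Pmap a) (Finsupp.single (g, w) 1)
        + augOne a •
          Pmap (muPair R.rho R.rho (Finsupp.single (x₀, ([] : List X)) 1)
            (Finsupp.single (g, w) 1)) := by
  induction a using Finsupp.induction_linear with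
  | zero => simp
  | add a a' ha ha' =>
    rw [muPair_add_left, Pmap_add, ha, ha', Pmap_add, muPair_add_left, augOne_add,
      smul_add, add_smul]
    abel
  | single p z =>
    obtain ⟨y, _ | ⟨x, t⟩⟩ := p
    · simp only [muPair_single_single, Pmap_single_nil, muPair_zero_left, augOne_single_nil,
        smul_zero, zero_add, List.map_nil, List.nil_append]
      exact Pmap_single_eq_smul _ _ w z
    · simp only [muPair_single_single, Pmap_single_cons, List.map_cons, List.cons_append,
        augOne_single_cons, zero_smul, add_zero, Finsupp.smul_single, List.length_append,
        List.length_map, smul_eq_mul, pow_add]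
      ring_nf
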